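/- In A_5 = K[x,y,z]/(x^2, y^2, xz, yz, xy - z^3) with maximal ideal m = ⟨x,y,z,z^2,z^3⟩ and Soc A_5 = ⟨z^3⟩, for any two hyperplanes U, U' of m complementary to ⟨z^3⟩ there exists a K-algebra automorphism φ of A_5 with φ(U) = U'. -/

import Mathlib

/-!
The substitutions `x ↦ x + a z³`, `y ↦ y + b z³`, `z ↦ z + c z² + d z³` respect the defining
relations (every correction term is a multiple of a relation or of `z⁴ = 0`), so they give
automorphisms of `A_5`; all of them fix `z³`, hence preserve `Soc A_5` and `m`.
A complement `U` of `⟨z³⟩` in `m` is described by the `z³`-components `t₁, …, t₄` of `x, y, z, z²`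
along `U`. Taking `a = -t₁`, `b = -t₂`, `c = -t₄/2` and
`d = -t₃ + t₄²/2` sends the standard complement `⟨x, y, z, z²⟩` into `U`, and by the modular law
a complement contained in another one equals it. So every complement lies in the orbit of the
standard one.
-/

open MvPolynomial

theorem Submodule.exists_sub_smul_mem_of_mem_sup_span_singleton {R M : Type*} [Ring R]
    [AddCommGroup M] [Module R M] {U : Submodule R M} {v w : M}
    (hw : w ∈ U ⊔ span R {v}) : ∃ t : R, w - t • v ∈ U := by
  obtain ⟨u, hu, s, hs, rfl⟩ := mem_sup.mp hw
  obtain ⟨t, rfl⟩ := mem_span_singleton.mp hs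
  exact ⟨t, by simpa using hu⟩

noncomputable section

def A5.ideal (K : Type*) [CommRing K] : Ideal (MvPolynomial (Fin 3) K) :=
  Ideal.span {X 0 ^ 2, X 1 ^ 2, X 0 * X 2, X 1 * X 2, X 0 * X 1 - X 2 ^ 3}

abbrev A5 (K : Type*) [CommRing K] := MvPolynomial (Fin 3) K ⧸ A5.ideal K

namespace A5

section Presentation

variable (K : Type*) [CommRing K]

def x : A5 K := Ideal.Quotient.mk (ideal K) (X 0)
def y : A5 K := Ideal.Quotient.mk (ideal K) (X 1)
def z : A5 K := Ideal.Quotient.mk (ideal K) (X 2)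

variable {K}

theorem mk_eq_zero_of_mem {p : MvPolynomial (Fin 3) K}
    (hp : p ∈ ({X 0 ^ 2, X 1 ^ 2, X 0 * X 2, X 1 * X 2, X 0 * X 1 - X 2 ^ 3} :
      Set (MvPolynomial (Fin 3) K))) :
    Ideal.Quotient.mk (ideal K) p = 0 :=
  Ideal.Quotient.eq_zero_iff_mem.mpr (Ideal.subset_span hp)

variable (K)

theorem x_sq : x K ^ 2 = 0 := by
  rw [x, ← map_pow]; exact mk_eq_zero_of_mem (by simp)

theorem y_sq : y K ^ 2 = 0 := by
  rw [y, ← map_pow]; exact mk_eq_zero_of_mem (by simp)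

theorem x_mul_z : x K * z K = 0 := by
  rw [x, z, ← map_mul]; exact mk_eq_zero_of_mem (by simp)

theorem y_mul_z : y K * z K = 0 := by
  rw [y, z, ← map_mul]; exact mk_eq_zero_of_mem (by simp)

theorem x_mul_y : x K * y K = z K ^ 3 := by
  rw [x, y, z, ← map_mul, ← map_pow, ← sub_eq_zero, ← map_sub]
  exact mk_eq_zero_of_mem (by simp)

theorem z_pow_four : z K ^ 4 = 0 := by
  linear_combination y K * x_mul_z K - z K * x_mul_y K

variable {K}

theorem algHom_ext {B : Type*} [Semiring B] [Algebra K B] {f g : A5 K →ₐ[K] B}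
    (hx : f (x K) = g (x K)) (hy : f (y K) = g (y K)) (hz : f (z K) = g (z K)) : f = g := by
  refine Ideal.Quotient.algHom_ext _ (MvPolynomial.algHom_ext fun i => ?_)
  fin_cases i
  exacts [hx, hy, hz]

-- `Algebra.smul_def` does not rewrite here: the scalar action on the quotient is found as
-- `Submodule.Quotient.instSMul'`, which agrees with `Algebra.toSMul` only up to unfolding.
theorem smul_eq_algebraMap_mul (a : K) (w : A5 K) : a • w = algebraMap K (A5 K) a * w :=
  Algebra.smul_def a w

end Presentation

section Shift

variable {K : Type*} [CommRing K] (a b c d : K)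

def shiftImages : Fin 3 → A5 K :=
  ![x K + a • z K ^ 3, y K + b • z K ^ 3, z K + c • z K ^ 2 + d • z K ^ 3]

theorem ideal_le_ker_aeval_shiftImages :
    ideal K ≤ RingHom.ker (aeval (shiftImages a b c d)) := by
  have hz4 := z_pow_four K
  refine (Ideal.span_le).mpr ?_
  rintro p (rfl | rfl | rfl | rfl | rfl) <;>
    simp only [SetLike.mem_coe, RingHom.mem_ker, map_mul, map_pow, map_sub, aeval_X,
      shiftImages, Matrix.cons_val_zero, Matrix.cons_val_one, Matrix.cons_val_two,
      Matrix.head_cons, Matrix.tail_cons, smul_eq_algebraMap_mul]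
  all_goals
    set ζ := z K
    set a' := algebraMap K (A5 K) a
    set b' := algebraMap K (A5 K) b
    set c' := algebraMap K (A5 K) c
    set d' := algebraMap K (A5 K) d
  · linear_combination x_sq K + 2 * a' * ζ ^ 2 * x_mul_z K + a' ^ 2 * ζ ^ 2 * hz4
  · linear_combination y_sq K + 2 * b' * ζ ^ 2 * y_mul_z K + b' ^ 2 * ζ ^ 2 * hz4
  · linear_combination
      (1 + c' * ζ + d' * ζ ^ 2) * x_mul_z K + a' * (1 + c' * ζ + d' * ζ ^ 2) * hz4
  · linear_combination
      (1 + c' * ζ + d' * ζ ^ 2) * y_mul_z K + b' * (1 + c' * ζ + d' * ζ ^ 2) * hz4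
  · linear_combination x_mul_y K + a' * ζ ^ 2 * y_mul_z K + b' * ζ ^ 2 * x_mul_z K
      + (a' * b' * ζ ^ 2 - 3 * (c' + d' * ζ) - 3 * ζ * (c' + d' * ζ) ^ 2
        - ζ ^ 2 * (c' + d' * ζ) ^ 3) * hz4

def shift : A5 K →ₐ[K] A5 K :=
  Ideal.Quotient.liftₐ (ideal K) (aeval (shiftImages a b c d))
    fun _ hp => RingHom.mem_ker.mp (ideal_le_ker_aeval_shiftImages a b c d hp)

theorem shift_mk (p : MvPolynomial (Fin 3) K) :
    shift a b c d (Ideal.Quotient.mk (ideal K) p) = aeval (shiftImages a b c d) p :=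
  rfl

theorem shift_x : shift a b c d (x K) = x K + a • z K ^ 3 := by
  rw [x, shift_mk, aeval_X]; rfl

theorem shift_y : shift a b c d (y K) = y K + b • z K ^ 3 := by
  rw [y, shift_mk, aeval_X]; rfl

theorem shift_z : shift a b c d (z K) = z K + c • z K ^ 2 + d • z K ^ 3 := by
  rw [z, shift_mk, aeval_X]; rfl

theorem shift_z_sq : shift a b c d (z K ^ 2) = z K ^ 2 + (2 * c) • z K ^ 3 := by
  have hz4 := z_pow_four K
  rw [map_pow, shift_z]
  simp only [smul_eq_algebraMap_mul, map_mul, map_ofNat]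
  linear_combination (algebraMap K _ c ^ 2 + 2 * algebraMap K _ d
    + 2 * algebraMap K _ c * algebraMap K _ d * z K + algebraMap K _ d ^ 2 * z K ^ 2) * hz4

theorem shift_z_cube : shift a b c d (z K ^ 3) = z K ^ 3 := by
  have hz4 := z_pow_four K
  rw [map_pow, shift_z]
  simp only [smul_eq_algebraMap_mul]
  set w := algebraMap K _ c + algebraMap K _ d * z K
  linear_combination (3 * w + 3 * z K * w ^ 2 + z K ^ 2 * w ^ 3) * hz4

theorem shift_comp_shift_inv :
    (shift a b c d).comp (shift (-a) (-b) (-c) (2 * c ^ 2 - d)) = AlgHom.id K (A5 K) := by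
  apply algHom_ext <;>
    simp only [AlgHom.comp_apply, AlgHom.id_apply, shift_x, shift_y, shift_z, map_add,
      map_smul, shift_z_sq, shift_z_cube]
  all_goals module


theorem shift_inv_comp_shift :
    (shift (-a) (-b) (-c) (2 * c ^ 2 - d)).comp (shift a b c d) = AlgHom.id K (A5 K) := by
  have h := shift_comp_shift_inv (-a) (-b) (-c) (2 * c ^ 2 - d)
  rwa [neg_neg, neg_neg, neg_neg, show 2 * (-c) ^ 2 - (2 * c ^ 2 - d) = d by ring] at h

def shiftEquiv : A5 K ≃ₐ[K] A5 K :=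
  AlgEquiv.ofAlgHom (shift a b c d) (shift (-a) (-b) (-c) (2 * c ^ 2 - d))
    (shift_comp_shift_inv a b c d) (shift_inv_comp_shift a b c d)

theorem shiftEquiv_apply (w : A5 K) : shiftEquiv a b c d w = shift a b c d w :=
  rfl

end Shift

section Hyperplanes

variable (K : Type*) [CommRing K]

def maxIdeal : Submodule K (A5 K) := Submodule.span K {x K, y K, z K, z K ^ 2, z K ^ 3}

def socle : Submodule K (A5 K) := K ∙ z K ^ 3

def stdHyperplane : Submodule K (A5 K) := Submodule.span K {x K, y K, z K, z K ^ 2}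

theorem stdHyperplane_sup_socle : stdHyperplane K ⊔ socle K = maxIdeal K := by
  rw [stdHyperplane, socle, maxIdeal, ← Submodule.span_union]
  congr 1
  ext w
  simp only [Set.mem_union, Set.mem_insert_iff, Set.mem_singleton_iff]
  tauto

variable {K} (a b c d : K)

theorem map_shiftEquiv_socle : (socle K).map (shiftEquiv a b c d).toLinearMap = socle K := by
  rw [socle, Submodule.map_span, Set.image_singleton, AlgEquiv.toLinearMap_apply,
    shiftEquiv_apply, shift_z_cube]

theorem map_shift_maxIdeal_le : (maxIdeal K).map (shift a b c d).toLinearMap ≤ maxIdeal K := by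
  have hx : x K ∈ maxIdeal K := Submodule.subset_span (by simp)
  have hy : y K ∈ maxIdeal K := Submodule.subset_span (by simp)
  have hz : z K ∈ maxIdeal K := Submodule.subset_span (by simp)
  have hz2 : z K ^ 2 ∈ maxIdeal K := Submodule.subset_span (by simp)
  have hz3 : z K ^ 3 ∈ maxIdeal K := Submodule.subset_span (by simp)
  rw [Submodule.map_le_iff_le_comap, maxIdeal, Submodule.span_le]
  rintro _ (rfl | rfl | rfl | rfl | rfl) <;>
    simp only [SetLike.mem_coe, Submodule.mem_comap, AlgHom.toLinearMap_apply, shift_x, shift_y,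
      shift_z, shift_z_sq, shift_z_cube]
  · exact add_mem hx (Submodule.smul_mem _ _ hz3)
  · exact add_mem hy (Submodule.smul_mem _ _ hz3)
  · exact add_mem (add_mem hz (Submodule.smul_mem _ _ hz2)) (Submodule.smul_mem _ _ hz3)
  · exact add_mem hz2 (Submodule.smul_mem _ _ hz3)
  · exact hz3

theorem map_shiftEquiv_maxIdeal :
    (maxIdeal K).map (shiftEquiv a b c d).toLinearMap = maxIdeal K := by
  refine le_antisymm (map_shift_maxIdeal_le a b c d) fun w hw => ?_
  exact ⟨(shiftEquiv a b c d).symm w,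
    map_shift_maxIdeal_le _ _ _ _ (Submodule.mem_map_of_mem hw),
    (shiftEquiv a b c d).apply_symm_apply w⟩

theorem exists_shiftEquiv_map_stdHyperplane {K : Type*} [Field K] [NeZero (2 : K)]
    {U : Submodule K (A5 K)} (hsup : U ⊔ socle K = maxIdeal K) (hinf : U ⊓ socle K = ⊥) :
    ∃ φ : A5 K ≃ₐ[K] A5 K, (stdHyperplane K).map φ.toLinearMap = U := by
  have proj (w : A5 K) (hw : w ∈ maxIdeal K) : ∃ t : K, w - t • z K ^ 3 ∈ U :=
    Submodule.exists_sub_smul_mem_of_mem_sup_span_singleton (hsup ▸ hw)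
  obtain ⟨t₁, hx⟩ := proj (x K) (Submodule.subset_span (by simp))
  obtain ⟨t₂, hy⟩ := proj (y K) (Submodule.subset_span (by simp))
  obtain ⟨t₃, hz⟩ := proj (z K) (Submodule.subset_span (by simp))
  obtain ⟨t₄, hz2⟩ := proj (z K ^ 2) (Submodule.subset_span (by simp))
  have two_mul_half : 2 * (t₄ / 2) = t₄ := mul_div_cancel₀ t₄ two_ne_zero
  set φ := shiftEquiv (-t₁) (-t₂) (-(t₄ / 2)) (-t₃ + t₄ * (t₄ / 2))
  have hle : (stdHyperplane K).map φ.toLinearMap ≤ U := by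
    rw [Submodule.map_le_iff_le_comap, stdHyperplane, Submodule.span_le]
    rintro _ (rfl | rfl | rfl | rfl) <;>
      simp only [SetLike.mem_coe, Submodule.mem_comap, AlgEquiv.toLinearMap_apply, φ,
        shiftEquiv_apply, shift_x, shift_y, shift_z, shift_z_sq, mul_neg, two_mul_half]
    · convert hx using 1; module
    · convert hy using 1; module
    · convert add_mem hz (U.smul_mem (-(t₄ / 2)) hz2) using 1; module
    · convert hz2 using 1; module
  have hge : U ≤ (stdHyperplane K).map φ.toLinearMap ⊔ socle K :=
    calc U ≤ maxIdeal K := hsup ▸ le_sup_left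
      _ = (maxIdeal K).map φ.toLinearMap := (map_shiftEquiv_maxIdeal _ _ _ _).symm
      _ = (stdHyperplane K).map φ.toLinearMap ⊔ socle K := by
        rw [← stdHyperplane_sup_socle, Submodule.map_sup, map_shiftEquiv_socle]
  exact ⟨φ, eq_of_le_of_inf_le_of_le_sup hle (hinf ▸ bot_le) hge⟩

theorem exists_algEquiv_map_eq {K : Type*} [Field K] [NeZero (2 : K)]
    {U U' : Submodule K (A5 K)} (hsup : U ⊔ socle K = maxIdeal K) (hinf : U ⊓ socle K = ⊥)
    (hsup' : U' ⊔ socle K = maxIdeal K) (hinf' : U' ⊓ socle K = ⊥) :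
    ∃ φ : A5 K ≃ₐ[K] A5 K, U.map φ.toLinearMap = U' := by
  obtain ⟨φ, rfl⟩ := exists_shiftEquiv_map_stdHyperplane hsup hinf
  obtain ⟨ψ, rfl⟩ := exists_shiftEquiv_map_stdHyperplane hsup' hinf'
  refine ⟨φ.symm.trans ψ, ?_⟩
  rw [← Submodule.map_comp]
  congr 1
  exact LinearMap.ext fun w => by simp

end Hyperplanes

end A5

end

/-- In `A_5 = K[x,y,z]/(x^2, y^2, xz, yz, xy - z^3)` with maximal ideal
`m = ⟨x, y, z, z^2, z^3⟩_K` and `Soc A_5 = ⟨z^3⟩`, for any two hyperplanes `U, U'` of `m`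
complementary to `⟨z^3⟩` there exists a `K`-algebra automorphism `φ` of `A_5` with
`φ(U) = U'`. -/
theorem stmt15 (K : Type*) [Field K] [CharZero K] :
    let I : Ideal (MvPolynomial (Fin 3) K) :=
      Ideal.span {X 0 ^ 2, X 1 ^ 2, X 0 * X 2, X 1 * X 2, X 0 * X 1 - X 2 ^ 3};
    let A := MvPolynomial (Fin 3) K ⧸ I;
    let q : MvPolynomial (Fin 3) K →+* A := Ideal.Quotient.mk I;
    let m : Submodule K A :=
      Submodule.span K {q (X 0), q (X 1), q (X 2), q (X 2 ^ 2), q (X 2 ^ 3)};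
    let c : A := q (X 2 ^ 3);
    ∀ U U' : Submodule K A,
      U ⊔ Submodule.span K {c} = m → U ⊓ Submodule.span K {c} = ⊥ →
      U' ⊔ Submodule.span K {c} = m → U' ⊓ Submodule.span K {c} = ⊥ →
      ∃ φ : A ≃ₐ[K] A, U.map φ.toLinearMap = U' := by
  intro I A q m c U U' hsup hinf hsup' hinf'
  have hsocle : Submodule.span K {c} = A5.socle K := by
    simp only [c, map_pow]; rfl
  have hm : m = A5.maxIdeal K := by
    simp only [m, map_pow]; rfl
  rw [hsocle, hm] at hsup hsup'
  rw [hsocle] at hinf hinf'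
  exact A5.exists_algEquiv_map_eq hsup hinf hsup' hinf'
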